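/- arXiv:1007.2612 — 3 statements merged into one kernel-verified Lean document; each statement's English description precedes it below -/
import Mathlib

section
/- FWER control under weakened size condition: The conclusion of Theorem 1 still holds if condition (D4) is weakened to (D4'): E_P[δ_m(α)] ≤ α for every m ∈ 𝓜₀ and every α ∈ [0,1]. That is, under (D1)–(D3), (D4') and (A1)–(A3), for every q ∈ [0,1], P(S₀(α†(q)) ≥ 1) ≤ q. -/
/-!
Statement 2: Strong FWER control under weakened size condition (D4').
Under (D1)–(D3), (D4') for the multiple decision process Δ = (δ_m) and (A1)–(A3) for the
multiple decision size function A = (A_m), for every probability measure P and every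
q ∈ [0,1], P(S₀(α†(q)) ≥ 1) ≤ q.
-/

open MeasureTheory ProbabilityTheory Function Set
open Filter Topology

noncomputable section

/-- The number of false discoveries `S₀(α) = ∑_{m ∈ 𝓜₀} δ_m(A_m(α))`. -/
def Szero {X ι : Type*} [Fintype ι] (M0 : Finset ι) (A : ι → ℝ → ℝ)
    (δ : ι → ℝ → X → ℝ) (α : ℝ) (x : X) : ℝ :=
  ∑ m ∈ M0, δ m (A m α) x

/-- The process `H₁(α) = ∏_{m ∈ 𝓜} (1 - A_m(α))^{1 - δ_m(A_m(α)-)}`, where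
`δ_m(A_m(α)-)` denotes the left-hand limit of the path `β ↦ δ_m(β)` at `A_m(α)`. -/
def Hone {X ι : Type*} [Fintype ι] (A : ι → ℝ → ℝ)
    (δ : ι → ℝ → X → ℝ) (α : ℝ) (x : X) : ℝ :=
  ∏ m, (1 - A m α) ^ (1 - Function.leftLim (fun β => δ m β x) (A m α))

/-- The first crossing time `α†(q) = inf {α ∈ [0,1] : H₁(α) < 1 - q}` (with `inf ∅ = 1`). -/
def alphaDag {X ι : Type*} [Fintype ι] (A : ι → ℝ → ℝ)
    (δ : ι → ℝ → X → ℝ) (q : ℝ) (x : X) : ℝ :=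
  sInf ({α ∈ Set.Icc (0:ℝ) 1 | Hone A δ α x < 1 - q} ∪ {1})

/-- The σ-algebra generated by the decision process `α ↦ δ_m(α)`, `α ∈ [0,1]`. -/
def procSigma {X : Type*} (δm : ℝ → X → ℝ) : MeasurableSpace X :=
  ⨆ α ∈ Set.Icc (0:ℝ) 1, MeasurableSpace.comap (δm α) Real.measurableSpace

/-!
Fix a sample point. Each null path jumps from 0 to 1 at some level, so let `T` be the first time
`α` at which some null hypothesis is rejected. Before `T` every null path still has left limit `0`
at `A_m(α)`, so the null factors of `H₁(α)` are exactly `1 - A_m(α)` and the others are at most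
`1`; since `α < T ≤ α†(q)` also gives `H₁(α) ≥ 1 - q`, continuity yields
`∏_{m ∈ 𝓜₀} (1 - A_m(T)) ≥ 1 - q`. Hence `T ≤ s*`, the largest deterministic `s` with
`∏_{m ∈ 𝓜₀} (1 - A_m(s)) ≥ 1 - q`, and a false rejection at `α†(q)` forces one at `s*`.
By independence of the null processes and (D4'), the latter has probability at most
`1 - ∏_{m ∈ 𝓜₀} (1 - A_m(s*)) ≤ q`.
-/

theorem exists_eq_ite_of_monotoneOn {f : ℝ → ℝ} (hmono : MonotoneOn f (Icc 0 1))
    (hvals : ∀ β ∈ Icc (0:ℝ) 1, f β = 0 ∨ f β = 1)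
    (hrc : ∀ β ∈ Ico (0:ℝ) 1, ContinuousWithinAt f (Ici β) β) (h1 : f 1 = 1) :
    ∃ t ∈ Icc (0:ℝ) 1, ∀ β ∈ Icc (0:ℝ) 1, f β = if t ≤ β then 1 else 0 := by
  set S := {β ∈ Icc (0:ℝ) 1 | f β = 1}
  have h1S : (1:ℝ) ∈ S := ⟨right_mem_Icc.2 zero_le_one, h1⟩
  have hglb : IsGLB S (sInf S) := isGLB_csInf ⟨1, h1S⟩ ⟨0, fun β hβ => hβ.1.1⟩
  have ht : sInf S ∈ Icc (0:ℝ) 1 :=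
    ⟨le_csInf ⟨1, h1S⟩ fun β hβ => hβ.1.1, hglb.1 h1S⟩
  -- otherwise right-continuity gives `f < 1` just right of `sInf S`, where `S` accumulates
  have hft : f (sInf S) = 1 := by
    refine (hvals _ ht).resolve_left fun h0 => ?_
    have hlt : sInf S < 1 := ht.2.lt_of_ne fun h => by rw [h, h1] at h0; norm_num at h0
    have hsmall : ∀ᶠ β in 𝓝[≥] sInf S, f β < 1 :=
      (hrc _ ⟨ht.1, hlt⟩).eventually (gt_mem_nhds (by rw [h0]; norm_num))
    obtain ⟨β, hβS, hβ⟩ := ((hglb.frequently_mem ⟨1, h1S⟩).and_eventually hsmall).exists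
    exact hβ.ne hβS.2
  refine ⟨sInf S, ht, fun β hβ => ?_⟩
  split_ifs with h
  · exact (hvals β hβ).resolve_left fun h0 => by linarith [hmono ht hβ h]
  · exact (hvals β hβ).resolve_right fun h1' => h (hglb.1 ⟨hβ, h1'⟩)

theorem leftLim_eq_of_forall_mem_Ioo {f : ℝ → ℝ} {a c y : ℝ} (hac : a < c)
    (h : ∀ β ∈ Ioo a c, f β = y) : leftLim f c = y :=
  leftLim_eq_of_tendsto <|
    tendsto_const_nhds.congr' (eventually_of_mem (Ioo_mem_nhdsLT hac) fun β hβ => (h β hβ).symm)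

theorem leftLim_eq_ite {f : ℝ → ℝ} {t c : ℝ} (ht : 0 ≤ t)
    (hf : ∀ β ∈ Icc (0:ℝ) 1, f β = if t ≤ β then 1 else 0) (hc : c ∈ Ioc (0:ℝ) 1) :
    leftLim f c = if t < c then 1 else 0 := by
  split_ifs with h
  · exact leftLim_eq_of_forall_mem_Ioo h fun β hβ => by
      rw [hf β ⟨ht.trans hβ.1.le, hβ.2.le.trans hc.2⟩, if_pos hβ.1.le]
  · exact leftLim_eq_of_forall_mem_Ioo hc.1 fun β hβ => by
      rw [hf β ⟨hβ.1.le, hβ.2.le.trans hc.2⟩,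
        if_neg (not_le.2 (hβ.2.trans_le (not_lt.1 h)))]

theorem isClosed_setOf_le_prod_one_sub {ι : Type*} {A : ι → ℝ → ℝ} (M0 : Finset ι) (c : ℝ)
    (hAcont : ∀ m, ContinuousOn (A m) (Icc 0 1)) :
    IsClosed {s ∈ Icc (0:ℝ) 1 | c ≤ ∏ m ∈ M0, (1 - A m s)} :=
  (continuousOn_finsetProd _ fun m _ => continuousOn_const.sub (hAcont m))
    |>.preimage_isClosed_of_isClosed isClosed_Icc isClosed_Ici

section Crossing

variable {X ι : Type*} [Fintype ι] {A : ι → ℝ → ℝ} {δ : ι → ℝ → X → ℝ} {q : ℝ}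
  {x : X}

theorem alphaDag_mem_Icc : alphaDag A δ q x ∈ Icc (0:ℝ) 1 :=
  ⟨le_csInf ⟨1, Or.inr rfl⟩ (by rintro a (⟨ha, -⟩ | rfl); exacts [ha.1, zero_le_one]),
    csInf_le ⟨0, by rintro a (⟨ha, -⟩ | rfl); exacts [ha.1, zero_le_one]⟩ (Or.inr rfl)⟩

theorem one_sub_le_Hone_of_lt_alphaDag {α : ℝ} (hα : α ∈ Icc (0:ℝ) 1)
    (hlt : α < alphaDag A δ q x) : 1 - q ≤ Hone A δ α x := by
  by_contra! h
  have hbdd : BddBelow ({α ∈ Icc (0:ℝ) 1 | Hone A δ α x < 1 - q} ∪ {1}) :=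
    ⟨0, by rintro a (⟨ha, -⟩ | rfl); exacts [ha.1, zero_le_one]⟩
  exact hlt.not_ge (csInf_le hbdd (Or.inl ⟨hα, h⟩))

theorem Hone_le_prod {t : ι → ℝ} {α : ℝ} (M0 : Finset ι) (ht : ∀ m, 0 ≤ t m)
    (hδ : ∀ m, ∀ β ∈ Icc (0:ℝ) 1, δ m β x = if t m ≤ β then 1 else 0)
    (hA : ∀ m, A m α ∈ Ioc (0:ℝ) 1) (hnull : ∀ m ∈ M0, A m α ≤ t m) :
    Hone A δ α x ≤ ∏ m ∈ M0, (1 - A m α) := by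
  classical
  have hlim m : leftLim (fun β => δ m β x) (A m α) = if t m < A m α then 1 else 0 :=
    leftLim_eq_ite (ht m) (hδ m) (hA m)
  have hsub_one m : 0 ≤ 1 - A m α := by linarith [(hA m).2]
  rw [Hone, ← Finset.prod_mul_prod_compl M0]
  rw [Finset.prod_congr rfl fun m hm => by
    rw [hlim, if_neg (hnull m hm).not_gt, sub_zero, Real.rpow_one]]
  refine mul_le_of_le_one_right (Finset.prod_nonneg fun m _ => hsub_one m)
    (Finset.prod_le_one (fun m _ => Real.rpow_nonneg (hsub_one m) _) fun m _ => ?_)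
  refine Real.rpow_le_one (hsub_one m) (by linarith [(hA m).1]) ?_
  rw [hlim]
  split_ifs <;> norm_num

theorem exists_null_rejection_of_one_le_Szero {t : ι → ℝ} (M0 : Finset ι)
    (ht : ∀ m, 0 ≤ t m) (hδ : ∀ m, ∀ β ∈ Icc (0:ℝ) 1, δ m β x = if t m ≤ β then 1 else 0)
    (hA : ∀ m, MapsTo (A m) (Icc 0 1) (Icc 0 1))
    (hApos : ∀ m, ∀ α ∈ Ioc (0:ℝ) 1, 0 < A m α) (hAcont : ∀ m, ContinuousOn (A m) (Icc 0 1))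
    (hG0 : 1 - q ≤ ∏ m ∈ M0, (1 - A m 0)) (hrej : 1 ≤ Szero M0 A δ (alphaDag A δ q x) x) :
    ∃ s ∈ Icc (0:ℝ) 1, 1 - q ≤ ∏ m ∈ M0, (1 - A m s) ∧ ∃ m ∈ M0, t m ≤ A m s := by
  set αd := alphaDag A δ q x
  set R := ⋃ m ∈ M0, {α ∈ Icc (0:ℝ) 1 | t m ≤ A m α}
  have hαdR : αd ∈ R := by
    obtain ⟨m, hm, hne⟩ := Finset.exists_ne_zero_of_sum_ne_zero
      (show Szero M0 A δ αd x ≠ 0 by linarith)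
    rw [hδ m _ (hA m alphaDag_mem_Icc)] at hne
    exact mem_biUnion hm ⟨alphaDag_mem_Icc, (ite_ne_right_iff.1 hne).1⟩
  have hRcpt : IsCompact R := isCompact_Icc.of_isClosed_subset
    (isClosed_biUnion_finset fun m _ =>
      (hAcont m).preimage_isClosed_of_isClosed isClosed_Icc isClosed_Ici)
    (iUnion₂_subset fun m _ => sep_subset _ _)
  obtain ⟨T, hTR, hTmin⟩ := hRcpt.exists_isLeast ⟨αd, hαdR⟩
  obtain ⟨m₁, hm₁, hT, htT⟩ := mem_iUnion₂.1 hTR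
  refine ⟨T, hT, ?_, m₁, hm₁, htT⟩
  have hbefore : Ioo 0 T ⊆ {s ∈ Icc (0:ℝ) 1 | 1 - q ≤ ∏ m ∈ M0, (1 - A m s)} := by
    intro α hα
    have hαI : α ∈ Icc (0:ℝ) 1 := ⟨hα.1.le, hα.2.le.trans hT.2⟩
    refine ⟨hαI, (one_sub_le_Hone_of_lt_alphaDag hαI (hα.2.trans_le (hTmin hαdR))).trans ?_⟩
    refine Hone_le_prod M0 ht hδ (fun m => ⟨hApos m α ⟨hα.1, hαI.2⟩, (hA m hαI).2⟩)
      fun m hm => ?_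
    by_contra! h
    exact hα.2.not_ge (hTmin (mem_biUnion hm ⟨hαI, h.le⟩))
  rcases hT.1.eq_or_lt with h0 | h0
  · rwa [← h0]
  · have hTcl : T ∈ closure (Ioo 0 T) := by rw [closure_Ioo h0.ne]; exact right_mem_Icc.2 h0.le
    exact (closure_minimal hbefore (isClosed_setOf_le_prod_one_sub M0 _ hAcont) hTcl).2

end Crossing

section Probability

variable {Ω : Type*} [MeasurableSpace Ω] {μ : Measure Ω}

theorem integral_eq_measureReal_of_eq_zero_or_one {f : Ω → ℝ} (hf : Measurable f)
    (h01 : ∀ x, f x = 0 ∨ f x = 1) : ∫ x, f x ∂μ = μ.real {x | f x = 1} := by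
  calc ∫ x, f x ∂μ = ∫ x, {x | f x = 1}.indicator 1 x ∂μ :=
        integral_congr_ae (ae_of_all _ fun x => by rcases h01 x with h | h <;> simp [h])
    _ = μ.real {x | f x = 1} := integral_indicator_one (hf (measurableSet_singleton 1))

theorem measureReal_iUnion_le_one_sub_prod {κ : Type*} [Fintype κ] {m : κ → MeasurableSpace Ω}
    {B : κ → Set Ω} {p : κ → ℝ} [IsProbabilityMeasure μ] (hind : iIndep m μ)
    (hBm : ∀ i, MeasurableSet[m i] (B i)) (hB : ∀ i, MeasurableSet (B i))
    (hp : ∀ i, μ.real (B i) ≤ p i) (hp1 : ∀ i, p i ≤ 1) :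
    μ.real (⋃ i, B i) ≤ 1 - ∏ i, (1 - p i) := by
  have hinter : μ.real (⋂ i, (B i)ᶜ) = ∏ i, (1 - μ.real (B i)) := by
    rw [measureReal_def, hind.meas_iInter fun i => (hBm i).compl, ENNReal.toReal_prod]
    exact Finset.prod_congr rfl fun i _ => by rw [← measureReal_def, measureReal_compl (hB i),
      probReal_univ]
  rw [← compl_compl (⋃ i, B i), compl_iUnion,
    measureReal_compl (MeasurableSet.iInter fun i => (hB i).compl), probReal_univ, hinter]
  gcongr with i
  · exact fun i _ => by linarith [hp1 i]
  · exact hp i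

end Probability

theorem measurableSet_procSigma {X : Type*} {δm : ℝ → X → ℝ} {α : ℝ}
    (hα : α ∈ Icc (0:ℝ) 1) {S : Set ℝ} (hS : MeasurableSet S) :
    MeasurableSet[procSigma δm] (δm α ⁻¹' S) :=
  le_iSup₂ (f := fun α (_ : α ∈ Icc (0:ℝ) 1) => MeasurableSpace.comap (δm α) _) α hα _
    ⟨S, hS, rfl⟩

theorem fwer_strong_control_weak_size_general
    {X ι : Type*} [MeasurableSpace X] [Fintype ι]
    (P : Measure X) [IsProbabilityMeasure P]
    -- the partition 𝓜 = 𝓜₀(P) ∪ 𝓜₁(P)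
    (M0 : Finset ι)
    -- the multiple decision process Δ and the size function A
    (δ : ι → ℝ → X → ℝ) (A : ι → ℝ → ℝ)
    (hmeas : ∀ m, ∀ α ∈ Set.Icc (0:ℝ) 1, Measurable (δ m α))
    (hvals : ∀ m, ∀ α ∈ Set.Icc (0:ℝ) 1, ∀ x, δ m α x = 0 ∨ δ m α x = 1)
    -- (D1)
    (hD1 : ∀ m, ∀ᵐ x ∂P, δ m 0 x = 0 ∧ δ m 1 x = 1)
    -- (D2): nondecreasing right-continuous {0,1}-valued paths
    (hD2 : ∀ᵐ x ∂P, ∀ m, MonotoneOn (fun α => δ m α x) (Set.Icc 0 1) ∧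
      ∀ α ∈ Set.Ico (0:ℝ) 1, ContinuousWithinAt (fun β => δ m β x) (Set.Ici α) α)
    -- (D3): the null and alternative families are independent of each other,
    -- and the null processes are mutually independent
    (hD3b : iIndep (fun m : {m // m ∈ M0} => procSigma (δ (m : ι))) P)
    -- (D4'): each null decision function has size at most α
    (hD4 : ∀ m ∈ M0, ∀ α ∈ Set.Icc (0:ℝ) 1, ∫ x, δ m α x ∂P ≤ α)
    -- (A1)–(A3)
    (hA1 : ∀ m, A m 0 = 0 ∧ A m 1 = 1)
    (hA2 : ∀ m, ContinuousOn (A m) (Set.Icc 0 1) ∧ StrictMonoOn (A m) (Set.Icc 0 1))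
    (q : ℝ) (hq : q ∈ Set.Icc (0:ℝ) 1) :
    P {x | 1 ≤ Szero M0 A δ (alphaDag A δ q x) x} ≤ ENNReal.ofReal q := by
  have hA m : MapsTo (A m) (Icc 0 1) (Icc 0 1) := by
    simpa only [hA1 m] using (hA2 m).2.monotoneOn.mapsTo_Icc
  have hApos m : ∀ α ∈ Ioc (0:ℝ) 1, 0 < A m α := fun α hα => by
    simpa only [(hA1 m).1] using (hA2 m).2 (left_mem_Icc.2 zero_le_one) ⟨hα.1.le, hα.2⟩ hα.1
  have hG0 : 1 - q ≤ ∏ m ∈ M0, (1 - A m 0) := by simp [hA1, hq.1]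
  obtain ⟨s, ⟨hs, hGs⟩, hsmax⟩ :
      ∃ s, IsGreatest {s ∈ Icc (0:ℝ) 1 | 1 - q ≤ ∏ m ∈ M0, (1 - A m s)} s :=
    (isCompact_Icc.of_isClosed_subset (isClosed_setOf_le_prod_one_sub M0 _ fun m => (hA2 m).1)
      (sep_subset _ _)).exists_isGreatest ⟨0, left_mem_Icc.2 zero_le_one, hG0⟩
  set B : M0 → Set X := fun m => δ m (A m s) ⁻¹' {1}
  have hbad : ∀ᵐ x ∂P, 1 ≤ Szero M0 A δ (alphaDag A δ q x) x → x ∈ ⋃ m, B m := by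
    filter_upwards [ae_all_iff.2 hD1, hD2] with x h01 hpath hx
    choose t ht hδ using fun m => exists_eq_ite_of_monotoneOn (hpath m).1
      (fun β hβ => hvals m β hβ x) (hpath m).2 (h01 m).2
    obtain ⟨s', hs', hGs', m, hm, htm⟩ := exists_null_rejection_of_one_le_Szero M0
      (fun m => (ht m).1) hδ hA hApos (fun m => (hA2 m).1) hG0 hx
    have hAs : A m s' ≤ A m s := (hA2 m).2.monotoneOn hs' hs (hsmax ⟨hs', hGs'⟩)
    exact mem_iUnion.2 ⟨⟨m, hm⟩, (hδ m _ (hA m hs)).trans (if_pos (htm.trans hAs))⟩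
  have hPB (i : M0) : P.real (B i) ≤ A i s :=
    (integral_eq_measureReal_of_eq_zero_or_one (hmeas i _ (hA i hs)) (hvals i _ (hA i hs))).symm
      |>.trans_le (hD4 i i.2 _ (hA i hs))
  have hunion := measureReal_iUnion_le_one_sub_prod hD3b
    (fun i => measurableSet_procSigma (hA i hs) (measurableSet_singleton 1))
    (fun i => hmeas i _ (hA i hs) (measurableSet_singleton 1)) hPB (fun i => (hA i hs).2)
  rw [Finset.prod_coe_sort M0 (fun m => 1 - A m s)] at hunion
  calc P {x | 1 ≤ Szero M0 A δ (alphaDag A δ q x) x} ≤ P (⋃ i, B i) := measure_mono_ae hbad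
    _ = ENNReal.ofReal (P.real (⋃ i, B i)) := (ofReal_measureReal).symm
    _ ≤ ENNReal.ofReal q := ENNReal.ofReal_le_ofReal (by linarith)

/-- **Theorem 1 (strong FWER control).** -/
theorem fwer_strong_control_weak_size
    {X ι : Type*} [MeasurableSpace X] [Fintype ι] [DecidableEq ι] [Nonempty ι]
    (P : Measure X) [IsProbabilityMeasure P]
    -- the partition 𝓜 = 𝓜₀(P) ∪ 𝓜₁(P)
    (M0 M1 : Finset ι) (hpart : M0 ∪ M1 = Finset.univ) (hdisj : Disjoint M0 M1)
    -- the multiple decision process Δ and the size function A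
    (δ : ι → ℝ → X → ℝ) (A : ι → ℝ → ℝ)
    (hmeas : ∀ m, ∀ α ∈ Set.Icc (0:ℝ) 1, Measurable (δ m α))
    (hvals : ∀ m, ∀ α ∈ Set.Icc (0:ℝ) 1, ∀ x, δ m α x = 0 ∨ δ m α x = 1)
    -- (D1)
    (hD1 : ∀ m, ∀ᵐ x ∂P, δ m 0 x = 0 ∧ δ m 1 x = 1)
    -- (D2): nondecreasing right-continuous {0,1}-valued paths
    (hD2 : ∀ᵐ x ∂P, ∀ m, MonotoneOn (fun α => δ m α x) (Set.Icc 0 1) ∧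
      ∀ α ∈ Set.Ico (0:ℝ) 1, ContinuousWithinAt (fun β => δ m β x) (Set.Ici α) α)
    -- (D3): the null and alternative families are independent of each other,
    -- and the null processes are mutually independent
    (hD3a : Indep (⨆ m ∈ M0, procSigma (δ m)) (⨆ m ∈ M1, procSigma (δ m)) P)
    (hD3b : iIndep (fun m : {m // m ∈ M0} => procSigma (δ (m : ι))) P)
    -- (D4'): each null decision function has size at most α
    (hD4 : ∀ m ∈ M0, ∀ α ∈ Set.Icc (0:ℝ) 1, ∫ x, δ m α x ∂P ≤ α)
    -- (A1)–(A3)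
    (hArange : ∀ m, ∀ α ∈ Set.Icc (0:ℝ) 1, A m α ∈ Set.Icc (0:ℝ) 1)
    (hA1 : ∀ m, A m 0 = 0 ∧ A m 1 = 1)
    (hA2 : ∀ m, ContinuousOn (A m) (Set.Icc 0 1) ∧ StrictMonoOn (A m) (Set.Icc 0 1))
    (hA3 : ∀ α ∈ Set.Icc (0:ℝ) 1, 1 - α ≤ ∏ m, (1 - A m α))
    (q : ℝ) (hq : q ∈ Set.Icc (0:ℝ) 1) :
    P {x | 1 ≤ Szero M0 A δ (alphaDag A δ q x) x} ≤ ENNReal.ofReal q :=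
  fwer_strong_control_weak_size_general P M0 δ A hmeas hvals hD1 hD2 hD3b hD4 hA1 hA2 q hq

end
end

section
/- Šidák FDR property: Let A^S be the Šidák multiple decision size function with components A^S_m(α) = 1 − (1 − α)^{1/M} for all m ∈ 𝓜, where M = |𝓜|. Then for every multiple decision process Δ satisfying (D1)–(D4), every probability measure P (i.e., every partition 𝓜 = 𝓜₀ ∪ 𝓜₁), and every q ∈ [0,1], E_P[F(α*(q; Δ, A^S))] ≤ q. -/
/-!
Off a null set every decision path is the threshold path `α ↦ 1{p_m ≤ α}` of its p-value `p_m`,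
and the Šidák level `α ↦ 1 - (1 - α)^{1/M}` is a strictly increasing bijection of `[0,1]`. Hence
`α*` is the preimage of the Benjamini–Hochberg threshold of the p-values, and the false discovery
proportion at `α*` is that of the BH procedure. For a true null `m`, setting `p_m := 0` does not
change the number of BH rejections when `m` is rejected, so the contribution of `m` is
`1{p_m ≤ q K_m / M} / K_m` with `K_m` a function of the other p-values, hence independent of
`p_m`. As `p_m` is uniform, this has expectation at most `q / M`; summing over the nulls gives `q`.
-/

open MeasureTheory ProbabilityTheory Function Set

noncomputable section

/-- The Šidák multiple decision size function `A^S_m(α) = 1 - (1-α)^{1/M}`, `M = |𝓜|`. -/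
def sidakA (ι : Type*) [Fintype ι] : ι → ℝ → ℝ :=
  fun _ α => 1 - (1 - α) ^ ((Fintype.card ι : ℝ)⁻¹)

/-- The total number of discoveries `S(α) = ∑_{m ∈ 𝓜} δ_m(A_m(α))`. -/
def Stot {X ι : Type*} [Fintype ι] (A : ι → ℝ → ℝ)
    (δ : ι → ℝ → X → ℝ) (α : ℝ) (x : X) : ℝ :=
  ∑ m, δ m (A m α) x

/-- The false discovery proportion `F(α) = (S₀(α)/S(α))·I{S(α) > 0}` (with `0/0 = 0`). -/
def Fprop {X ι : Type*} [Fintype ι] (M0 : Finset ι) (A : ι → ℝ → ℝ)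
    (δ : ι → ℝ → X → ℝ) (α : ℝ) (x : X) : ℝ :=
  if 0 < Stot A δ α x then Szero M0 A δ α x / Stot A δ α x else 0

/-- The last crossing time `α*(q) = sup {α ∈ [0,1] : ∑_m A_m(α) ≤ q·S(α)}`. -/
def alphaStar {X ι : Type*} [Fintype ι] (A : ι → ℝ → ℝ)
    (δ : ι → ℝ → X → ℝ) (q : ℝ) (x : X) : ℝ :=
  sSup (insert 0 {α ∈ Set.Icc (0:ℝ) 1 | ∑ m, A m α ≤ q * Stot A δ α x})

section BenjaminiHochberg

variable {ι : Type*} [Fintype ι]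

def countLE (p : ι → ℝ) (t : ℝ) : ℕ := (Finset.univ.filter fun j => p j ≤ t).card

lemma countLE_mono (p : ι → ℝ) : Monotone (countLE p) := fun _ _ hst =>
  Finset.card_le_card fun j => by simpa using fun hj => hj.trans hst

lemma countLE_le_card (p : ι → ℝ) (t : ℝ) : countLE p t ≤ Fintype.card ι :=
  Finset.card_filter_le _ _

def bhCount (q : ℝ) (p : ι → ℝ) : ℕ :=
  Nat.findGreatest (fun k => k ≤ countLE p (q * k / Fintype.card ι)) (Fintype.card ι)

def bhThreshold (q : ℝ) (p : ι → ℝ) : ℝ := q * bhCount q p / Fintype.card ι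

def bhFDP (M0 : Finset ι) (q : ℝ) (p : ι → ℝ) : ℝ :=
  (M0.filter fun m => p m ≤ bhThreshold q p).card / countLE p (bhThreshold q p)

lemma bhCount_le_card (q : ℝ) (p : ι → ℝ) : bhCount q p ≤ Fintype.card ι :=
  Nat.findGreatest_le _

variable {q : ℝ}

lemma bhThreshold_nonneg (hq : 0 ≤ q) (p : ι → ℝ) : 0 ≤ bhThreshold q p := by
  unfold bhThreshold
  positivity

lemma countLE_bhThreshold (hq : 0 ≤ q) (p : ι → ℝ) :
    countLE p (bhThreshold q p) = bhCount q p := by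
  have hspec : bhCount q p ≤ countLE p (bhThreshold q p) :=
    Nat.findGreatest_spec (P := fun k => k ≤ countLE p (q * k / Fintype.card ι))
      (Nat.zero_le _) (Nat.zero_le _)
  refine le_antisymm (Nat.le_findGreatest (countLE_le_card p _) (countLE_mono p ?_)) hspec
  unfold bhThreshold
  gcongr
  exact hspec

lemma le_bhThreshold [Nonempty ι] (hq : 0 ≤ q) (p : ι → ℝ) {t : ℝ}
    (ht : Fintype.card ι * t ≤ q * countLE p t) : t ≤ bhThreshold q p := by
  have hN : (0 : ℝ) < Fintype.card ι := by exact_mod_cast Fintype.card_pos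
  have ht' : t ≤ q * countLE p t / Fintype.card ι := by
    rw [le_div_iff₀ hN]
    linarith
  have hk : countLE p t ≤ bhCount q p :=
    Nat.le_findGreatest (countLE_le_card p t) (countLE_mono p ht')
  exact ht'.trans (by unfold bhThreshold; gcongr)

lemma card_mul_bhThreshold [Nonempty ι] (hq : 0 ≤ q) (p : ι → ℝ) :
    Fintype.card ι * bhThreshold q p = q * countLE p (bhThreshold q p) := by
  have hN : (Fintype.card ι : ℝ) ≠ 0 := by exact_mod_cast Fintype.card_ne_zero
  rw [countLE_bhThreshold hq, bhThreshold]
  field_simp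

lemma bhThreshold_le [Nonempty ι] (hq : 0 ≤ q) (p : ι → ℝ) : bhThreshold q p ≤ q := by
  have hN : (0 : ℝ) < Fintype.card ι := by exact_mod_cast Fintype.card_pos
  rw [bhThreshold, mul_div_assoc]
  exact mul_le_of_le_one_right hq (div_le_one_of_le₀ (by exact_mod_cast bhCount_le_card q p) hN.le)

lemma isGreatest_bhThreshold [Nonempty ι] (hq : 0 ≤ q) (p : ι → ℝ) :
    IsGreatest {t | Fintype.card ι * t ≤ q * countLE p t} (bhThreshold q p) :=
  ⟨(card_mul_bhThreshold hq p).le, fun _ ht => le_bhThreshold hq p ht⟩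

variable [DecidableEq ι]

lemma countLE_le_countLE_update (p : ι → ℝ) (m : ι) {t : ℝ} (ht : 0 ≤ t) :
    countLE p t ≤ countLE (update p m 0) t := by
  refine Finset.card_le_card fun j => ?_
  rcases eq_or_ne j m with rfl | hj <;> simp [*]

lemma countLE_update_of_le (p : ι → ℝ) (m : ι) {t : ℝ} (ht : 0 ≤ t) (hm : p m ≤ t) :
    countLE (update p m 0) t = countLE p t := by
  unfold countLE
  congr 1
  ext j
  rcases eq_or_ne j m with rfl | hj <;> simp [*]

lemma one_le_bhCount_update (hq : 0 ≤ q) (p : ι → ℝ) (m : ι) :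
    1 ≤ bhCount q (update p m 0) := by
  rw [← countLE_bhThreshold hq]
  exact Finset.card_pos.2 ⟨m, by simp [bhThreshold_nonneg hq]⟩

variable [Nonempty ι]

lemma bhThreshold_le_update (hq : 0 ≤ q) (p : ι → ℝ) (m : ι) :
    bhThreshold q p ≤ bhThreshold q (update p m 0) := by
  refine le_bhThreshold hq _ ((card_mul_bhThreshold hq p).trans_le ?_)
  gcongr
  exact countLE_le_countLE_update p m (bhThreshold_nonneg hq p)

lemma bhThreshold_update_le (hq : 0 ≤ q) (p : ι → ℝ) (m : ι)
    (hm : p m ≤ bhThreshold q (update p m 0)) :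
    bhThreshold q (update p m 0) ≤ bhThreshold q p := by
  refine le_bhThreshold hq _ ?_
  rw [card_mul_bhThreshold hq, countLE_update_of_le p m (bhThreshold_nonneg hq _) hm]

lemma le_bhThreshold_update_iff (hq : 0 ≤ q) (p : ι → ℝ) (m : ι) :
    p m ≤ bhThreshold q (update p m 0) ↔ p m ≤ bhThreshold q p :=
  ⟨fun hm => hm.trans (bhThreshold_update_le hq p m hm),
    fun hm => hm.trans (bhThreshold_le_update hq p m)⟩

lemma bhCount_update_of_le (hq : 0 ≤ q) (p : ι → ℝ) (m : ι) (hm : p m ≤ bhThreshold q p) :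
    bhCount q (update p m 0) = bhCount q p := by
  have hT : bhThreshold q (update p m 0) = bhThreshold q p :=
    le_antisymm (bhThreshold_update_le hq p m ((le_bhThreshold_update_iff hq p m).2 hm))
      (bhThreshold_le_update hq p m)
  rw [← countLE_bhThreshold hq, ← countLE_bhThreshold hq, hT,
    countLE_update_of_le p m (bhThreshold_nonneg hq p) hm]

lemma ite_div_countLE_eq (hq : 0 ≤ q) (p : ι → ℝ) (m : ι) :
    (if p m ≤ bhThreshold q p then (1 : ℝ) else 0) / countLE p (bhThreshold q p) =
      if p m ≤ q / Fintype.card ι * bhCount q (update p m 0)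
      then (bhCount q (update p m 0) : ℝ)⁻¹ else 0 := by
  have hT : q / Fintype.card ι * bhCount q (update p m 0) = bhThreshold q (update p m 0) := by
    rw [bhThreshold]
    ring
  simp only [hT, le_bhThreshold_update_iff hq]
  split_ifs with hm
  · rw [countLE_bhThreshold hq, bhCount_update_of_le hq p m hm, one_div]
  · rw [zero_div]

end BenjaminiHochberg

section Measurability

variable {ι : Type*} [Fintype ι]

lemma measurable_countLE (t : ℝ) : Measurable fun p : ι → ℝ => countLE p t := by
  simp_rw [countLE, Finset.card_filter]
  exact Finset.measurable_sum _ fun j _ =>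
    Measurable.ite (measurableSet_le (measurable_pi_apply j) measurable_const)
      measurable_const measurable_const

lemma measurable_bhCount (q : ℝ) : Measurable (bhCount q : (ι → ℝ) → ℕ) := by
  suffices ∀ n, Measurable fun p : ι → ℝ =>
      Nat.findGreatest (fun k => k ≤ countLE p (q * k / Fintype.card ι)) n from this _
  intro n
  induction n with
  | zero => exact measurable_const
  | succ n ih =>
    simp only [Nat.findGreatest_succ]
    exact Measurable.ite (measurable_countLE _ MeasurableSet.of_discrete) measurable_const ih

end Measurability

section FDR

variable {X : Type*} [MeasurableSpace X] {P : Measure X} [IsProbabilityMeasure P]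

lemma integrable_ite_inv {U : X → ℝ} {K : X → ℕ} (hU : Measurable U) (hK : Measurable K)
    (c : ℝ) : Integrable (fun x => if U x ≤ c * K x then (K x : ℝ)⁻¹ else 0) P := by
  have hmeas : Measurable fun x => if U x ≤ c * K x then (K x : ℝ)⁻¹ else 0 :=
    Measurable.ite (measurableSet_le hU (measurable_const.mul (measurable_from_nat.comp hK)))
      (measurable_from_nat.comp hK).inv measurable_const
  refine Integrable.of_bound hmeas.aestronglyMeasurable 1 (ae_of_all _ fun x => ?_)
  split_ifs
  · rw [Real.norm_eq_abs, abs_inv, Nat.abs_cast]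
    exact Nat.cast_inv_le_one _
  · simp

lemma integral_ite_inv_le {U : X → ℝ} {K : X → ℕ} (hU : Measurable U) (hK : Measurable K)
    (hUK : IndepFun U K P) {N : ℕ} (hKN : ∀ x, K x ∈ Finset.Icc 1 N) {c : ℝ} (hc : 0 ≤ c)
    (hcN : c * N ≤ 1) (hvalid : ∀ t ∈ Icc (0 : ℝ) 1, P.real {x | U x ≤ t} ≤ t) :
    ∫ x, (if U x ≤ c * K x then (K x : ℝ)⁻¹ else 0) ∂P ≤ c := by
  have hA : ∀ k : ℕ, MeasurableSet (K ⁻¹' {k}) := fun k => hK (measurableSet_singleton k)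
  have hB : ∀ k : ℕ, MeasurableSet (U ⁻¹' Iic (c * k)) := fun k => hU measurableSet_Iic
  have hdecomp : (fun x => if U x ≤ c * K x then (K x : ℝ)⁻¹ else 0) = fun x =>
      ∑ k ∈ Finset.Icc 1 N, (K ⁻¹' {k} ∩ U ⁻¹' Iic (c * k)).indicator (fun _ => (k : ℝ)⁻¹) x := by
    funext x
    rw [Finset.sum_eq_single_of_mem (K x) (hKN x)]
    · by_cases hx : U x ≤ c * K x <;> simp [hx]
    · intro k _ hk
      exact indicator_of_notMem (fun hx => hk hx.1.symm) _
  have hterm : ∀ k ∈ Finset.Icc 1 N,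
      P.real (K ⁻¹' {k} ∩ U ⁻¹' Iic (c * k)) * (k : ℝ)⁻¹ ≤ P.real (K ⁻¹' {k}) * c := by
    intro k hk
    obtain ⟨hk1, hkN⟩ := Finset.mem_Icc.1 hk
    have hk0 : (0 : ℝ) < k := by exact_mod_cast hk1
    have hck : c * k ∈ Icc (0 : ℝ) 1 :=
      ⟨by positivity, le_trans (by gcongr) hcN⟩
    rw [measureReal_def, hUK.symm.measure_inter_preimage_eq_mul _ _ (measurableSet_singleton k)
      measurableSet_Iic, ENNReal.toReal_mul, ← measureReal_def, ← measureReal_def]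
    calc P.real (K ⁻¹' {k}) * P.real (U ⁻¹' Iic (c * k)) * (k : ℝ)⁻¹
        ≤ P.real (K ⁻¹' {k}) * (c * k) * (k : ℝ)⁻¹ := by gcongr; exact hvalid _ hck
      _ = P.real (K ⁻¹' {k}) * c := by field_simp
  calc ∫ x, (if U x ≤ c * K x then (K x : ℝ)⁻¹ else 0) ∂P
      = ∑ k ∈ Finset.Icc 1 N, P.real (K ⁻¹' {k} ∩ U ⁻¹' Iic (c * k)) * (k : ℝ)⁻¹ := by
        rw [hdecomp, integral_finsetSum _ fun k _ =>
          (integrable_const _).indicator ((hA k).inter (hB k))]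
        simp only [integral_indicator_const _ ((hA _).inter (hB _)), smul_eq_mul]
    _ ≤ ∑ k ∈ Finset.Icc 1 N, P.real (K ⁻¹' {k}) * c := Finset.sum_le_sum hterm
    _ = P.real (K ⁻¹' (Finset.Icc 1 N : Set ℕ)) * c := by
        rw [← Finset.sum_mul, sum_measureReal_preimage_singleton _ fun k _ => hA k]
    _ ≤ c := mul_le_of_le_one_left hc measureReal_le_one

variable {ι : Type*} [Fintype ι] [DecidableEq ι] [Nonempty ι]

theorem integral_bhFDP_le {p : X → ι → ℝ} (hp : Measurable p) (M0 : Finset ι) {q : ℝ}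
    (hq : q ∈ Icc (0 : ℝ) 1)
    (hind : ∀ m ∈ M0, IndepFun (fun x => p x m) (fun x => update (p x) m 0) P)
    (hvalid : ∀ m ∈ M0, ∀ t ∈ Icc (0 : ℝ) 1, P.real {x | p x m ≤ t} ≤ t) :
    ∫ x, bhFDP M0 q (p x) ∂P ≤ q * M0.card / Fintype.card ι := by
  have hN : (0 : ℝ) < Fintype.card ι := by exact_mod_cast Fintype.card_pos
  set K : ι → X → ℕ := fun m x => bhCount q (update (p x) m 0)
  have hK : ∀ m, Measurable (K m) := fun m => (measurable_bhCount q).comp (by fun_prop)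
  have hKN : ∀ m x, K m x ∈ Finset.Icc 1 (Fintype.card ι) := fun m x =>
    Finset.mem_Icc.2 ⟨one_le_bhCount_update hq.1 _ m, bhCount_le_card q _⟩
  have hpt : ∀ x, bhFDP M0 q (p x) = ∑ m ∈ M0,
      if p x m ≤ q / Fintype.card ι * K m x then (K m x : ℝ)⁻¹ else 0 := fun x => by
    rw [bhFDP, Finset.natCast_card_filter, Finset.sum_div]
    exact Finset.sum_congr rfl fun m _ => ite_div_countLE_eq hq.1 (p x) m
  have hcN : q / Fintype.card ι * Fintype.card ι ≤ 1 := by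
    rw [div_mul_cancel₀ _ hN.ne']
    exact hq.2
  simp_rw [hpt]
  rw [integral_finsetSum _ fun m _ => integrable_ite_inv (by fun_prop) (hK m) _]
  calc _ ≤ ∑ _m ∈ M0, q / Fintype.card ι := Finset.sum_le_sum fun m hm =>
        integral_ite_inv_le (by fun_prop) (hK m)
          ((hind m hm).comp measurable_id (measurable_bhCount q)) (hKN m)
          (div_nonneg hq.1 hN.le) hcN (hvalid m hm)
    _ = q * M0.card / Fintype.card ι := by
        rw [Finset.sum_const, nsmul_eq_mul]
        ring

end FDR

section PValue

variable {X : Type*}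

/-- The infimum runs over rational levels to keep `pval` measurable; the value `2` (any number
`> 1` would do) is the p-value of a path that never rejects. -/
def pval (δm : ℝ → X → ℝ) (x : X) : ℝ :=
  ⨅ r : Icc (0 : ℚ) 1, if δm r x = 1 then ((r : ℚ) : ℝ) else 2

instance : Nonempty (Icc (0 : ℚ) 1) := ⟨⟨0, le_rfl, zero_le_one⟩⟩

lemma Rat.cast_mem_Icc_zero_one {r : ℚ} (hr : r ∈ Icc (0 : ℚ) 1) : (r : ℝ) ∈ Icc (0 : ℝ) 1 :=
  ⟨by exact_mod_cast hr.1, by exact_mod_cast hr.2⟩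

lemma measurable_procSigma {δm : ℝ → X → ℝ} {α : ℝ} (hα : α ∈ Icc (0 : ℝ) 1) :
    Measurable[procSigma δm] (δm α) :=
  Measurable.of_comap_le (le_iSup₂ (f := fun α (_ : α ∈ Icc (0 : ℝ) 1) =>
    MeasurableSpace.comap (δm α) Real.measurableSpace) α hα)

lemma measurable_pval (δm : ℝ → X → ℝ) : Measurable[procSigma δm] (pval δm) :=
  Measurable.iInf fun r => Measurable.ite
    (measurable_procSigma (Rat.cast_mem_Icc_zero_one r.2)
      (measurableSet_singleton 1)) measurable_const measurable_const

lemma procSigma_le [MeasurableSpace X] {δm : ℝ → X → ℝ}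
    (hδm : ∀ α ∈ Icc (0 : ℝ) 1, Measurable (δm α)) : procSigma δm ≤ ‹MeasurableSpace X› :=
  iSup₂_le fun α hα => (hδm α hα).comap_le

variable {δm : ℝ → X → ℝ} {x : X}

lemma pval_le {r : ℚ} (hr : r ∈ Icc 0 1) (h : δm r x = 1) : pval δm x ≤ r := by
  have hbdd : BddBelow (range fun r : Icc (0 : ℚ) 1 =>
      if δm r x = 1 then ((r : ℚ) : ℝ) else 2) := by
    refine ⟨0, forall_mem_range.2 fun r => ?_⟩
    split_ifs
    · exact_mod_cast r.2.1
    · norm_num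
  exact (ciInf_le hbdd ⟨r, hr⟩).trans_eq (if_pos h)

lemma exists_rat_of_pval_lt {β : ℝ} (hβ : pval δm x < β) (hβ2 : β ≤ 2) :
    ∃ r : ℚ, r ∈ Icc 0 1 ∧ δm r x = 1 ∧ (r : ℝ) < β := by
  obtain ⟨r, hr⟩ := exists_lt_of_ciInf_lt hβ
  split_ifs at hr with h
  · exact ⟨r, r.2, h, hr⟩
  · linarith

lemma eq_one_of_le_of_eq_one (hvals : ∀ α ∈ Icc (0 : ℝ) 1, δm α x = 0 ∨ δm α x = 1)
    (hmono : MonotoneOn (fun α => δm α x) (Icc 0 1)) {s t : ℝ} (hs : s ∈ Icc (0 : ℝ) 1)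
    (ht : t ∈ Icc (0 : ℝ) 1) (hst : s ≤ t) (h1 : δm s x = 1) : δm t x = 1 :=
  (hvals t ht).resolve_left fun h0 => by linarith [hmono hs ht hst]

lemma pval_le_of_eq_one (hvals : ∀ α ∈ Icc (0 : ℝ) 1, δm α x = 0 ∨ δm α x = 1)
    (hmono : MonotoneOn (fun α => δm α x) (Icc 0 1)) {t : ℝ} (ht : t ∈ Icc (0 : ℝ) 1)
    (h1 : δm t x = 1) : pval δm x ≤ t := by
  rcases ht.2.eq_or_lt with rfl | ht1
  · exact_mod_cast pval_le (r := 1) ⟨zero_le_one, le_rfl⟩ (by exact_mod_cast h1)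
  refine le_of_forall_gt fun β hβ => ?_
  obtain ⟨r, htr, hrβ⟩ := exists_rat_btwn (lt_min hβ ht1)
  have hr : r ∈ Icc (0 : ℚ) 1 :=
    ⟨by exact_mod_cast ht.1.trans htr.le, by exact_mod_cast (hrβ.trans_le (min_le_right _ _)).le⟩
  have hr1 : δm r x = 1 := eq_one_of_le_of_eq_one hvals hmono ht
    (Rat.cast_mem_Icc_zero_one hr) htr.le h1
  exact (pval_le hr hr1).trans_lt (hrβ.trans_le (min_le_left _ _))

lemma eq_one_of_pval_le (hvals : ∀ α ∈ Icc (0 : ℝ) 1, δm α x = 0 ∨ δm α x = 1)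
    (hmono : MonotoneOn (fun α => δm α x) (Icc 0 1))
    (hrc : ∀ α ∈ Ico (0 : ℝ) 1, ContinuousWithinAt (fun β => δm β x) (Ici α) α)
    {t : ℝ} (ht : t ∈ Icc (0 : ℝ) 1) (hp : pval δm x ≤ t) : δm t x = 1 := by
  rcases ht.2.eq_or_lt with rfl | ht1
  · obtain ⟨r, hr, h1, -⟩ := exists_rat_of_pval_lt (hp.trans_lt one_lt_two) le_rfl
    exact eq_one_of_le_of_eq_one hvals hmono (Rat.cast_mem_Icc_zero_one hr)
      ht (by exact_mod_cast hr.2) h1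
  have hright : ∀ β ∈ Ioo t 1, δm β x = 1 := fun β hβ => by
    obtain ⟨r, hr, h1, hrβ⟩ := exists_rat_of_pval_lt (hp.trans_lt hβ.1) (by linarith [hβ.2])
    exact eq_one_of_le_of_eq_one hvals hmono (Rat.cast_mem_Icc_zero_one hr)
      ⟨ht.1.trans hβ.1.le, hβ.2.le⟩ hrβ.le h1
  have hlim : Filter.Tendsto (fun β => δm β x) (nhdsWithin t (Ioi t)) (nhds (δm t x)) :=
    (hrc t ⟨ht.1, ht1⟩).mono_left (nhdsWithin_mono t Ioi_subset_Ici_self)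
  refine tendsto_nhds_unique hlim (tendsto_const_nhds.congr' ?_)
  filter_upwards [Ioo_mem_nhdsGT ht1] with β hβ
  exact (hright β hβ).symm

lemma eq_ite_pval_le (hvals : ∀ α ∈ Icc (0 : ℝ) 1, δm α x = 0 ∨ δm α x = 1)
    (hmono : MonotoneOn (fun α => δm α x) (Icc 0 1))
    (hrc : ∀ α ∈ Ico (0 : ℝ) 1, ContinuousWithinAt (fun β => δm β x) (Ici α) α)
    {t : ℝ} (ht : t ∈ Icc (0 : ℝ) 1) : δm t x = if pval δm x ≤ t then 1 else 0 := by
  split_ifs with hp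
  · exact eq_one_of_pval_le hvals hmono hrc ht hp
  · exact (hvals t ht).resolve_right fun h1 => hp (pval_le_of_eq_one hvals hmono ht h1)

lemma measureReal_pval_le_eq_integral [MeasurableSpace X] {P : Measure X}
    (hδm : ∀ α ∈ Icc (0 : ℝ) 1, Measurable (δm α)) {t : ℝ}
    (hrep : ∀ᵐ x ∂P, δm t x = if pval δm x ≤ t then 1 else 0) :
    P.real {x | pval δm x ≤ t} = ∫ x, δm t x ∂P := by
  have hmeas : Measurable (pval δm) := (measurable_pval δm).mono (procSigma_le hδm) le_rfl
  rw [← integral_indicator_one (s := {x | pval δm x ≤ t}) (hmeas measurableSet_Iic)]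
  refine integral_congr_ae (hrep.mono fun x hx => ?_)
  rw [hx]
  by_cases h : pval δm x ≤ t <;> simp [h]

end PValue

section IndependentBlocks

variable {Ω : Type*} {mΩ : MeasurableSpace Ω} {μ : Measure Ω} [IsProbabilityMeasure μ]

lemma indep_sup_right_of_indep {m₁ m₂ m₃ : MeasurableSpace Ω} (h₁ : m₁ ≤ mΩ) (h₂ : m₂ ≤ mΩ)
    (h₃ : m₃ ≤ mΩ) (h₁₂ : Indep m₁ m₂ μ) (h₁₂₃ : Indep (m₁ ⊔ m₂) m₃ μ) :
    Indep m₁ (m₂ ⊔ m₃) μ := by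
  -- `m₂ ⊔ m₃` is generated by the π-system of intersections `B ∩ C`
  let p : Set (Set Ω) := image2 (· ∩ ·) {B | MeasurableSet[m₂] B} {C | MeasurableSet[m₃] C}
  have hp : IsPiSystem p := by
    rintro _ ⟨B, hB, C, hC, rfl⟩ _ ⟨B', hB', C', hC', rfl⟩ -
    exact ⟨B ∩ B', hB.inter hB', C ∩ C', hC.inter hC', by ac_rfl⟩
  have hgen : m₂ ⊔ m₃ = MeasurableSpace.generateFrom p := by
    refine le_antisymm (sup_le (fun B hB => ?_) (fun C hC => ?_)) ?_
    · exact MeasurableSpace.measurableSet_generateFrom ⟨B, hB, univ, .univ, inter_univ B⟩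
    · exact MeasurableSpace.measurableSet_generateFrom ⟨univ, .univ, C, hC, univ_inter C⟩
    · refine MeasurableSpace.generateFrom_le ?_
      rintro _ ⟨B, hB, C, hC, rfl⟩
      exact (le_sup_left (a := m₂) B hB).inter (le_sup_right (b := m₃) C hC)
  refine IndepSets.indep h₁ (sup_le h₂ h₃) (@MeasurableSpace.isPiSystem_measurableSet Ω m₁) hp
    (@MeasurableSpace.generateFrom_measurableSet Ω m₁).symm hgen ?_
  rw [IndepSets_iff]
  rintro A _ hA ⟨B, hB, C, hC, rfl⟩
  rw [Indep_iff] at h₁₂ h₁₂₃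
  have hAB : MeasurableSet[m₁ ⊔ m₂] (A ∩ B) :=
    (le_sup_left (a := m₁) A hA).inter (le_sup_right (b := m₂) B hB)
  calc μ (A ∩ (B ∩ C)) = μ (A ∩ B) * μ C := by rw [← inter_assoc, h₁₂₃ _ _ hAB hC]
    _ = μ A * (μ B * μ C) := by rw [h₁₂ _ _ hA hB, mul_assoc]
    _ = μ A * μ (B ∩ C) := by rw [h₁₂₃ _ _ (le_sup_right (b := m₂) B hB) hC]

variable {ι : Type*} [DecidableEq ι] {σ : ι → MeasurableSpace Ω}

lemma indep_erase_sup {M0 M1 : Finset ι} (hσ : ∀ j, σ j ≤ mΩ)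
    (h01 : Indep (⨆ j ∈ M0, σ j) (⨆ j ∈ M1, σ j) μ)
    (h0 : iIndep (fun m : {m // m ∈ M0} => σ m) μ) {m : ι} (hm : m ∈ M0) :
    Indep (σ m) ((⨆ j ∈ M0.erase m, σ j) ⊔ ⨆ j ∈ M1, σ j) μ := by
  have hsup : ∀ s : Finset ι, (⨆ j ∈ s, σ j) ≤ mΩ := fun s => iSup₂_le fun j _ => hσ j
  have hm_erase : Indep (σ m) (⨆ j ∈ M0.erase m, σ j) μ := by
    refine indep_of_indep_of_le (indep_iSup_of_disjoint (m := fun j : {m // m ∈ M0} => σ j)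
      (fun j => hσ j) h0 (disjoint_compl_right (a := {⟨m, hm⟩}))) ?_ ?_
    · exact le_iSup₂ (f := fun (j : {m // m ∈ M0}) (_ : j ∈ ({⟨m, hm⟩} : Set _)) => σ j)
        ⟨m, hm⟩ rfl
    · refine iSup₂_le fun j hj => ?_
      obtain ⟨hjm, hj0⟩ := Finset.mem_erase.1 hj
      exact le_iSup₂ (f := fun (i : {m // m ∈ M0}) (_ : i ∈ ({⟨m, hm⟩}ᶜ : Set _)) => σ i)
        ⟨j, hj0⟩ (by simpa [Subtype.ext_iff] using hjm)
  refine indep_sup_right_of_indep (hσ m) (hsup _) (hsup _) hm_erase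
    (indep_of_indep_of_le_left h01 (sup_le ?_ ?_))
  · exact le_iSup₂ (f := fun j (_ : j ∈ M0) => σ j) m hm
  · exact iSup₂_mono' fun j hj => ⟨j, Finset.mem_of_mem_erase hj, le_rfl⟩

lemma indepFun_update_of_indep [Fintype ι] {M0 M1 : Finset ι} (hσ : ∀ j, σ j ≤ mΩ)
    (hpart : M0 ∪ M1 = Finset.univ) (h01 : Indep (⨆ j ∈ M0, σ j) (⨆ j ∈ M1, σ j) μ)
    (h0 : iIndep (fun m : {m // m ∈ M0} => σ m) μ) {p : Ω → ι → ℝ}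
    (hp : ∀ j, Measurable[σ j] fun ω => p ω j) {m : ι} (hm : m ∈ M0) :
    IndepFun (fun ω => p ω m) (fun ω => update (p ω) m 0) μ := by
  have hupdate : Measurable[(⨆ j ∈ M0.erase m, σ j) ⊔ ⨆ j ∈ M1, σ j]
      fun ω => update (p ω) m 0 := by
    refine @measurable_pi_lambda _ _ _ ((⨆ j ∈ M0.erase m, σ j) ⊔ ⨆ j ∈ M1, σ j) _ _ fun j => ?_
    rcases eq_or_ne j m with rfl | hj
    · simp
    simp only [update_of_ne hj]
    refine (hp j).mono ?_ le_rfl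
    rcases Finset.mem_union.1 (hpart ▸ Finset.mem_univ j : j ∈ M0 ∪ M1) with hj0 | hj1
    · exact (le_iSup₂ (f := fun i (_ : i ∈ M0.erase m) => σ i) j
        (Finset.mem_erase.2 ⟨hj, hj0⟩)).trans le_sup_left
    · exact (le_iSup₂ (f := fun i (_ : i ∈ M1) => σ i) j hj1).trans le_sup_right
  rw [IndepFun_iff_Indep]
  exact indep_of_indep_of_le (indep_erase_sup hσ h01 h0 hm) (hp m).comap_le hupdate.comap_le

end IndependentBlocks

section Sidak

def sidakLevel (M : ℕ) (α : ℝ) : ℝ := 1 - (1 - α) ^ (M : ℝ)⁻¹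

lemma sidakA_apply {ι : Type*} [Fintype ι] (m : ι) (α : ℝ) :
    sidakA ι m α = sidakLevel (Fintype.card ι) α := rfl

lemma sidakLevel_mem_Icc (M : ℕ) {α : ℝ} (hα : α ∈ Icc (0 : ℝ) 1) :
    sidakLevel M α ∈ Icc (0 : ℝ) 1 := by
  have h0 : 0 ≤ 1 - α := by linarith [hα.2]
  unfold sidakLevel
  constructor
  · linarith [Real.rpow_le_one h0 (by linarith [hα.1]) (inv_nonneg.2 (Nat.cast_nonneg M))]
  · linarith [Real.rpow_nonneg h0 (M : ℝ)⁻¹]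

lemma one_sub_one_sub_pow_mem_Icc (M : ℕ) {t : ℝ} (ht : t ∈ Icc (0 : ℝ) 1) :
    1 - (1 - t) ^ M ∈ Icc (0 : ℝ) 1 := by
  have h0 : 0 ≤ 1 - t := by linarith [ht.2]
  constructor
  · linarith [pow_le_one₀ h0 (by linarith [ht.1] : 1 - t ≤ 1) (n := M)]
  · linarith [pow_nonneg h0 M]

variable {M : ℕ}

lemma strictMonoOn_sidakLevel (hM : M ≠ 0) : StrictMonoOn (sidakLevel M) (Icc 0 1) := by
  intro a _ b hb hab
  have := Real.rpow_lt_rpow (by linarith [hb.2] : 0 ≤ 1 - b) (by linarith : 1 - b < 1 - a)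
    (inv_pos.2 (Nat.cast_pos.2 (Nat.pos_of_ne_zero hM)))
  unfold sidakLevel
  linarith

lemma sidakLevel_one_sub_one_sub_pow (hM : M ≠ 0) {t : ℝ} (ht : t ≤ 1) :
    sidakLevel M (1 - (1 - t) ^ M) = t := by
  rw [sidakLevel, sub_sub_cancel, Real.pow_rpow_inv_natCast (by linarith) hM]
  ring

lemma isGreatest_sidakLevel_preimage (hM : M ≠ 0) {S : Set ℝ} {T : ℝ} (hT : IsGreatest S T)
    (hT1 : T ∈ Icc (0 : ℝ) 1) :
    IsGreatest {α ∈ Icc (0 : ℝ) 1 | sidakLevel M α ∈ S} (1 - (1 - T) ^ M) := by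
  have hα : 1 - (1 - T) ^ M ∈ Icc (0 : ℝ) 1 := one_sub_one_sub_pow_mem_Icc M hT1
  have hs : sidakLevel M (1 - (1 - T) ^ M) = T := sidakLevel_one_sub_one_sub_pow hM hT1.2
  refine ⟨⟨hα, by rw [hs]; exact hT.1⟩, fun β ⟨hβ, hβS⟩ => ?_⟩
  exact ((strictMonoOn_sidakLevel hM).le_iff_le hβ hα).1 (by rw [hs]; exact hT.2 hβS)

variable {X ι : Type*} [Fintype ι] {δ : ι → ℝ → X → ℝ} {x : X} {p : ι → ℝ}

lemma Stot_sidakA_eq (hrep : ∀ j, ∀ t ∈ Icc (0 : ℝ) 1, δ j t x = if p j ≤ t then 1 else 0)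
    {α : ℝ} (hα : α ∈ Icc (0 : ℝ) 1) :
    Stot (sidakA ι) δ α x = countLE p (sidakLevel (Fintype.card ι) α) := by
  rw [Stot, countLE, Finset.natCast_card_filter]
  exact Finset.sum_congr rfl fun j _ => hrep j _ (sidakLevel_mem_Icc _ hα)

lemma Szero_sidakA_eq (hrep : ∀ j, ∀ t ∈ Icc (0 : ℝ) 1, δ j t x = if p j ≤ t then 1 else 0)
    (M0 : Finset ι) {α : ℝ} (hα : α ∈ Icc (0 : ℝ) 1) :
    Szero M0 (sidakA ι) δ α x = (M0.filter fun m => p m ≤ sidakLevel (Fintype.card ι) α).card := by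
  rw [Szero, Finset.natCast_card_filter]
  exact Finset.sum_congr rfl fun j _ => hrep j _ (sidakLevel_mem_Icc _ hα)

variable [Nonempty ι] {q : ℝ}

lemma alphaStar_sidakA_eq
    (hrep : ∀ j, ∀ t ∈ Icc (0 : ℝ) 1, δ j t x = if p j ≤ t then 1 else 0)
    (hq : q ∈ Icc (0 : ℝ) 1) :
    alphaStar (sidakA ι) δ q x = 1 - (1 - bhThreshold q p) ^ Fintype.card ι := by
  have hT1 : bhThreshold q p ∈ Icc (0 : ℝ) 1 :=
    ⟨bhThreshold_nonneg hq.1 p, (bhThreshold_le hq.1 p).trans hq.2⟩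
  have hset : {α ∈ Icc (0 : ℝ) 1 | ∑ m, sidakA ι m α ≤ q * Stot (sidakA ι) δ α x} =
      {α ∈ Icc (0 : ℝ) 1 | sidakLevel (Fintype.card ι) α ∈
        {t | Fintype.card ι * t ≤ q * countLE p t}} := by
    ext α
    refine and_congr_right fun hα => ?_
    simp [Stot_sidakA_eq hrep hα, sidakA_apply]
  have hG := (isGreatest_sidakLevel_preimage (Fintype.card_ne_zero (α := ι))
    (isGreatest_bhThreshold hq.1 p) hT1).insert 0
  rw [alphaStar, hset, hG.csSup_eq, max_eq_right (one_sub_one_sub_pow_mem_Icc _ hT1).1]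

lemma Fprop_sidakA_alphaStar_eq
    (hrep : ∀ j, ∀ t ∈ Icc (0 : ℝ) 1, δ j t x = if p j ≤ t then 1 else 0)
    (M0 : Finset ι) (hq : q ∈ Icc (0 : ℝ) 1) :
    Fprop M0 (sidakA ι) δ (alphaStar (sidakA ι) δ q x) x = bhFDP M0 q p := by
  have hT1 : bhThreshold q p ∈ Icc (0 : ℝ) 1 :=
    ⟨bhThreshold_nonneg hq.1 p, (bhThreshold_le hq.1 p).trans hq.2⟩
  have hα := one_sub_one_sub_pow_mem_Icc (Fintype.card ι) hT1
  rw [alphaStar_sidakA_eq hrep hq, Fprop, Stot_sidakA_eq hrep hα, Szero_sidakA_eq hrep M0 hα,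
    sidakLevel_one_sub_one_sub_pow Fintype.card_ne_zero hT1.2, bhFDP]
  split_ifs with hpos
  · rfl
  · rw [le_antisymm (not_lt.1 hpos) (Nat.cast_nonneg _), div_zero]

end Sidak

theorem sidak_fdr_property_general
    {X ι : Type*} [MeasurableSpace X] [Fintype ι] [DecidableEq ι] [Nonempty ι]
    (P : Measure X) [IsProbabilityMeasure P]
    (M0 M1 : Finset ι) (hpart : M0 ∪ M1 = Finset.univ)
    (δ : ι → ℝ → X → ℝ)
    (hmeas : ∀ m, ∀ α ∈ Set.Icc (0:ℝ) 1, Measurable (δ m α))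
    (hvals : ∀ m, ∀ α ∈ Set.Icc (0:ℝ) 1, ∀ x, δ m α x = 0 ∨ δ m α x = 1)
    -- (D2)
    (hD2 : ∀ᵐ x ∂P, ∀ m, MonotoneOn (fun α => δ m α x) (Set.Icc 0 1) ∧
      ∀ α ∈ Set.Ico (0:ℝ) 1, ContinuousWithinAt (fun β => δ m β x) (Set.Ici α) α)
    -- (D3)
    (hD3a : Indep (⨆ m ∈ M0, procSigma (δ m)) (⨆ m ∈ M1, procSigma (δ m)) P)
    (hD3b : iIndep (fun m : {m // m ∈ M0} => procSigma (δ (m : ι))) P)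
    -- (D4)
    (hD4 : ∀ m ∈ M0, ∀ α ∈ Set.Icc (0:ℝ) 1, ∫ x, δ m α x ∂P = α)
    (q : ℝ) (hq : q ∈ Set.Icc (0:ℝ) 1) :
    ∫ x, Fprop M0 (sidakA ι) δ (alphaStar (sidakA ι) δ q x) x ∂P ≤ q := by
  set p : X → ι → ℝ := fun x j => pval (δ j) x
  have hσ : ∀ j, procSigma (δ j) ≤ ‹MeasurableSpace X› := fun j => procSigma_le (hmeas j)
  have hrep : ∀ᵐ x ∂P, ∀ j, ∀ t ∈ Icc (0 : ℝ) 1, δ j t x = if p x j ≤ t then 1 else 0 :=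
    hD2.mono fun x hx j t ht => eq_ite_pval_le (fun α hα => hvals j α hα x) (hx j).1 (hx j).2 ht
  have hvalid : ∀ m ∈ M0, ∀ t ∈ Icc (0 : ℝ) 1, P.real {x | p x m ≤ t} ≤ t := fun m hm t ht =>
    ((measureReal_pval_le_eq_integral (hmeas m) (hrep.mono fun x hx => hx m t ht)).trans
      (hD4 m hm t ht)).le
  have hp : Measurable p :=
    measurable_pi_lambda _ fun j => (measurable_pval (δ j)).mono (hσ j) le_rfl
  rw [integral_congr_ae (hrep.mono fun x hx => Fprop_sidakA_alphaStar_eq hx M0 hq)]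
  calc _ ≤ q * M0.card / Fintype.card ι :=
        integral_bhFDP_le hp M0 hq (fun m hm => indepFun_update_of_indep hσ hpart hD3a hD3b
            (fun j => measurable_pval (δ j)) hm) hvalid
    _ ≤ q := by
        rw [mul_div_assoc]
        exact mul_le_of_le_one_right hq.1 (div_le_one_of_le₀
          (by exact_mod_cast Finset.card_le_univ M0) (Nat.cast_nonneg _))

/-- **Šidák FDR property**: the FDR of `δ*(q; Δ, A^S)` is at most `q`, for every
partition into true nulls `𝓜₀` and true alternatives `𝓜₁`. -/
theorem sidak_fdr_property
    {X ι : Type*} [MeasurableSpace X] [Fintype ι] [DecidableEq ι] [Nonempty ι]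
    (P : Measure X) [IsProbabilityMeasure P]
    (M0 M1 : Finset ι) (hpart : M0 ∪ M1 = Finset.univ) (hdisj : Disjoint M0 M1)
    (δ : ι → ℝ → X → ℝ)
    (hmeas : ∀ m, ∀ α ∈ Set.Icc (0:ℝ) 1, Measurable (δ m α))
    (hvals : ∀ m, ∀ α ∈ Set.Icc (0:ℝ) 1, ∀ x, δ m α x = 0 ∨ δ m α x = 1)
    -- (D1)
    (hD1 : ∀ m, ∀ᵐ x ∂P, δ m 0 x = 0 ∧ δ m 1 x = 1)
    -- (D2)
    (hD2 : ∀ᵐ x ∂P, ∀ m, MonotoneOn (fun α => δ m α x) (Set.Icc 0 1) ∧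
      ∀ α ∈ Set.Ico (0:ℝ) 1, ContinuousWithinAt (fun β => δ m β x) (Set.Ici α) α)
    -- (D3)
    (hD3a : Indep (⨆ m ∈ M0, procSigma (δ m)) (⨆ m ∈ M1, procSigma (δ m)) P)
    (hD3b : iIndep (fun m : {m // m ∈ M0} => procSigma (δ (m : ι))) P)
    -- (D4)
    (hD4 : ∀ m ∈ M0, ∀ α ∈ Set.Icc (0:ℝ) 1, ∫ x, δ m α x ∂P = α)
    (q : ℝ) (hq : q ∈ Set.Icc (0:ℝ) 1) :
    ∫ x, Fprop M0 (sidakA ι) δ (alphaStar (sidakA ι) δ q x) x ∂P ≤ q :=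
  sidak_fdr_property_general P M0 M1 hpart δ hmeas hvals hD2 hD3a hD3b hD4 q hq
end
end

section
/- Distribution of the minimum null generalized p-value: under (D1)–(D4) and (A1)–(A2), for every w ∈ [0,1], P(min_{m∈𝓜₀} α_m > w) = ∏_{m∈𝓜₀} (1 − A_m(w)). -/
/-!
A path `α ↦ δ_m(α)(x)` that is a nondecreasing, right-continuous `0/1` step function is still `0`
at `A_m(w)` exactly when the first time `α` with `δ_m(A_m(α))(x) = 1` lies beyond `w`: monotonicity
keeps the path at `0` before `w`, and right-continuity (transported through the continuous
increasing `A_m`) keeps it at `0` slightly after `w`. Hence, up to a null set,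
`{min_{m ∈ 𝓜₀} α_m > w} = ⋂_{m ∈ 𝓜₀} {δ_m(A_m(w)) = 0}`. Independence of the null processes
factors the probability of this intersection, and each factor is `1 - E δ_m(A_m(w)) = 1 - A_m(w)`
by (D4).
-/

open MeasureTheory ProbabilityTheory Function Set

noncomputable section

/-- The generalized p-value statistic `α_m = inf {α ∈ [0,1] : δ_m(A_m(α)) = 1}`. -/
def genP {X ι : Type*} (A : ι → ℝ → ℝ) (δ : ι → ℝ → X → ℝ) (m : ι) (x : X) : ℝ :=
  sInf {α ∈ Set.Icc (0:ℝ) 1 | δ m (A m α) x = 1}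

lemma lt_sInf_setOf_eq_one_iff {f : ℝ → ℝ} (hval : ∀ α ∈ Icc (0:ℝ) 1, f α = 0 ∨ f α = 1)
    (hf1 : f 1 = 1) (hmono : MonotoneOn f (Icc 0 1))
    (hrc : ∀ α ∈ Ico (0:ℝ) 1, ContinuousWithinAt f (Ici α) α) {w : ℝ} (hw : w ∈ Icc (0:ℝ) 1) :
    w < sInf {α ∈ Icc (0:ℝ) 1 | f α = 1} ↔ f w = 0 := by
  set S := {α ∈ Icc (0:ℝ) 1 | f α = 1}
  have hbdd : BddBelow S := ⟨0, fun α hα => hα.1.1⟩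
  refine ⟨fun h => (hval w hw).resolve_right fun hw1 => (csInf_le hbdd ⟨hw, hw1⟩).not_gt h,
    fun hw0 => ?_⟩
  have hw1 : w < 1 := hw.2.lt_of_ne (by rintro rfl; simp [hf1] at hw0)
  obtain ⟨c, hwc, hsmall⟩ := mem_nhdsGE_iff_exists_Ico_subset.1 <|
    (hrc w ⟨hw.1, hw1⟩).tendsto (by rw [hw0]; exact Iio_mem_nhds (by norm_num : (0:ℝ) < 1))
  have hS : ∀ α ∈ S, c ≤ α := by
    rintro α ⟨hα, hα1⟩
    by_contra! hαc
    rcases le_or_gt α w with hαw | hwα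
    · linarith [hmono hα hw hαw]
    · exact (hsmall ⟨hwα.le, hαc⟩ : f α < 1).ne hα1
  exact hwc.trans_le (le_csInf ⟨1, ⟨⟨zero_le_one, le_rfl⟩, hf1⟩⟩ hS)

lemma continuousWithinAt_Ici_comp {d a : ℝ → ℝ} {α : ℝ} (hα : α ∈ Ico (0:ℝ) 1)
    (hd : ContinuousWithinAt d (Ici (a α)) (a α)) (ha : ContinuousOn a (Icc 0 1))
    (hmono : MonotoneOn a (Icc 0 1)) :
    ContinuousWithinAt (d ∘ a) (Ici α) α := by
  have hαI : α ∈ Icc (0:ℝ) 1 := Ico_subset_Icc_self hα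
  have hmaps : MapsTo a (Icc α 1) (Ici (a α)) := fun β hβ =>
    hmono hαI ⟨hα.1.trans hβ.1, hβ.2⟩ hβ.1
  exact (hd.comp ((ha α hαI).mono (Icc_subset_Icc_left hα.1)) hmaps).mono_of_mem_nhdsWithin
    (Icc_mem_nhdsGE hα.2)

lemma lt_genP_iff {X ι : Type*} {A : ι → ℝ → ℝ} {δ : ι → ℝ → X → ℝ} {m : ι} {x : X}
    (hval : ∀ α ∈ Icc (0:ℝ) 1, δ m α x = 0 ∨ δ m α x = 1) (h1 : δ m 1 x = 1)
    (hmono : MonotoneOn (fun α => δ m α x) (Icc 0 1))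
    (hrc : ∀ α ∈ Ico (0:ℝ) 1, ContinuousWithinAt (fun β => δ m β x) (Ici α) α)
    (hA1 : A m 1 = 1) (hAcont : ContinuousOn (A m) (Icc 0 1))
    (hAmono : StrictMonoOn (A m) (Icc 0 1)) (hArange : MapsTo (A m) (Icc 0 1) (Icc 0 1))
    {w : ℝ} (hw : w ∈ Icc (0:ℝ) 1) :
    w < genP A δ m x ↔ δ m (A m w) x = 0 := by
  have hA_lt_one : ∀ α ∈ Ico (0:ℝ) 1, A m α ∈ Ico (0:ℝ) 1 := fun α hα =>
    ⟨(hArange (Ico_subset_Icc_self hα)).1,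
      hA1 ▸ hAmono (Ico_subset_Icc_self hα) ⟨zero_le_one, le_rfl⟩ hα.2⟩
  exact lt_sInf_setOf_eq_one_iff (f := fun α => δ m (A m α) x)
    (fun α hα => hval _ (hArange hα)) (by simp only [hA1, h1])
    (hmono.comp hAmono.monotoneOn hArange)
    (fun α hα => continuousWithinAt_Ici_comp hα (hrc _ (hA_lt_one α hα)) hAcont
      hAmono.monotoneOn) hw

lemma measure_preimage_zero_eq_ofReal_one_sub_integral {X : Type*} [MeasurableSpace X]
    {P : Measure X} [IsProbabilityMeasure P] {g : X → ℝ} (hg : Measurable g)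
    (hval : ∀ x, g x = 0 ∨ g x = 1) :
    P (g ⁻¹' {0}) = ENNReal.ofReal (1 - ∫ x, g x ∂P) := by
  set T := g ⁻¹' {1}
  have hT : MeasurableSet T := hg (measurableSet_singleton 1)
  have hg_ind : g = T.indicator 1 := by
    ext x
    rcases hval x with h | h <;> simp [T, h]
  have hcompl : g ⁻¹' {0} = Tᶜ := by
    ext x
    rcases hval x with h | h <;> simp [T, h]
  rw [hcompl, hg_ind, integral_indicator_one hT, ← probReal_compl_eq_one_sub hT,
    ofReal_measureReal]

lemma comap_le_procSigma {X : Type*} {δm : ℝ → X → ℝ} {α : ℝ} (hα : α ∈ Icc (0:ℝ) 1) :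
    MeasurableSpace.comap (δm α) Real.measurableSpace ≤ procSigma δm :=
  le_biSup (fun β => MeasurableSpace.comap (δm β) Real.measurableSpace) hα

lemma ProbabilityTheory.iIndep.meas_biInter_of_subtype {Ω ι : Type*} {_ : MeasurableSpace Ω}
    {μ : Measure Ω} {s : Finset ι} {m : ι → MeasurableSpace Ω}
    (h : iIndep (fun i : s => m i) μ) {E : ι → Set Ω} (hE : ∀ i ∈ s, MeasurableSet[m i] (E i)) :
    μ (⋂ i ∈ s, E i) = ∏ i ∈ s, μ (E i) := by
  rw [← Finset.prod_coe_sort, ← h.meas_iInter fun i => hE i i.2, iInter_subtype]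

theorem min_null_generalized_pvalue_distribution_general
    {X ι : Type*} [MeasurableSpace X]
    (P : Measure X) [IsProbabilityMeasure P]
    (M0 : Finset ι)
    (hM0 : M0.Nonempty)
    (δ : ι → ℝ → X → ℝ) (A : ι → ℝ → ℝ)
    (hmeas : ∀ m, ∀ α ∈ Set.Icc (0:ℝ) 1, Measurable (δ m α))
    (hvals : ∀ m, ∀ α ∈ Set.Icc (0:ℝ) 1, ∀ x, δ m α x = 0 ∨ δ m α x = 1)
    -- (D1)
    (hD1 : ∀ m, ∀ᵐ x ∂P, δ m 0 x = 0 ∧ δ m 1 x = 1)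
    -- (D2)
    (hD2 : ∀ᵐ x ∂P, ∀ m, MonotoneOn (fun α => δ m α x) (Set.Icc 0 1) ∧
      ∀ α ∈ Set.Ico (0:ℝ) 1, ContinuousWithinAt (fun β => δ m β x) (Set.Ici α) α)
    -- (D3)
    (hD3b : iIndep (fun m : {m // m ∈ M0} => procSigma (δ (m : ι))) P)
    -- (D4)
    (hD4 : ∀ m ∈ M0, ∀ α ∈ Set.Icc (0:ℝ) 1, ∫ x, δ m α x ∂P = α)
    -- (A1)–(A2)
    (hArange : ∀ m, ∀ α ∈ Set.Icc (0:ℝ) 1, A m α ∈ Set.Icc (0:ℝ) 1)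
    (hA1 : ∀ m, A m 0 = 0 ∧ A m 1 = 1)
    (hA2 : ∀ m, ContinuousOn (A m) (Set.Icc 0 1) ∧ StrictMonoOn (A m) (Set.Icc 0 1))
    (w : ℝ) (hw : w ∈ Set.Icc (0:ℝ) 1) :
    P {x | w < M0.inf' hM0 (fun m => genP A δ m x)} =
      ENNReal.ofReal (∏ m ∈ M0, (1 - A m w)) := by
  have hevent : {x | w < M0.inf' hM0 (fun m => genP A δ m x)} =ᵐ[P]
      ⋂ m ∈ M0, δ m (A m w) ⁻¹' {0} := by
    rw [Filter.eventuallyEq_set]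
    filter_upwards [(Filter.eventually_all_finset M0).2 fun m _ => hD1 m, hD2] with x h1 h2
    simp only [Finset.lt_inf'_iff, mem_iInter, mem_preimage, mem_singleton_iff]
    exact forall₂_congr fun m hm => lt_genP_iff (hvals m · · x) (h1 m hm).2 (h2 m).1 (h2 m).2
      (hA1 m).2 (hA2 m).1 (hA2 m).2 (hArange m) hw
  have hfactor : ∀ m ∈ M0, P (δ m (A m w) ⁻¹' {0}) = ENNReal.ofReal (1 - A m w) := fun m hm => by
    rw [measure_preimage_zero_eq_ofReal_one_sub_integral (hmeas m _ (hArange m w hw))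
      (hvals m _ (hArange m w hw)), hD4 m hm _ (hArange m w hw)]
  rw [measure_congr hevent, hD3b.meas_biInter_of_subtype fun m _ =>
      comap_le_procSigma (hArange m w hw) _ ⟨{0}, measurableSet_singleton 0, rfl⟩,
    ENNReal.ofReal_prod_of_nonneg fun m _ => sub_nonneg.2 (hArange m w hw).2]
  exact Finset.prod_congr rfl hfactor

/-- **Distribution of the minimum null generalized p-value.** -/
theorem min_null_generalized_pvalue_distribution
    {X ι : Type*} [MeasurableSpace X] [Fintype ι] [DecidableEq ι] [Nonempty ι]
    (P : Measure X) [IsProbabilityMeasure P]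
    (M0 M1 : Finset ι) (hpart : M0 ∪ M1 = Finset.univ) (hdisj : Disjoint M0 M1)
    (hM0 : M0.Nonempty)
    (δ : ι → ℝ → X → ℝ) (A : ι → ℝ → ℝ)
    (hmeas : ∀ m, ∀ α ∈ Set.Icc (0:ℝ) 1, Measurable (δ m α))
    (hvals : ∀ m, ∀ α ∈ Set.Icc (0:ℝ) 1, ∀ x, δ m α x = 0 ∨ δ m α x = 1)
    -- (D1)
    (hD1 : ∀ m, ∀ᵐ x ∂P, δ m 0 x = 0 ∧ δ m 1 x = 1)
    -- (D2)
    (hD2 : ∀ᵐ x ∂P, ∀ m, MonotoneOn (fun α => δ m α x) (Set.Icc 0 1) ∧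
      ∀ α ∈ Set.Ico (0:ℝ) 1, ContinuousWithinAt (fun β => δ m β x) (Set.Ici α) α)
    -- (D3)
    (hD3a : Indep (⨆ m ∈ M0, procSigma (δ m)) (⨆ m ∈ M1, procSigma (δ m)) P)
    (hD3b : iIndep (fun m : {m // m ∈ M0} => procSigma (δ (m : ι))) P)
    -- (D4)
    (hD4 : ∀ m ∈ M0, ∀ α ∈ Set.Icc (0:ℝ) 1, ∫ x, δ m α x ∂P = α)
    -- (A1)–(A2)
    (hArange : ∀ m, ∀ α ∈ Set.Icc (0:ℝ) 1, A m α ∈ Set.Icc (0:ℝ) 1)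
    (hA1 : ∀ m, A m 0 = 0 ∧ A m 1 = 1)
    (hA2 : ∀ m, ContinuousOn (A m) (Set.Icc 0 1) ∧ StrictMonoOn (A m) (Set.Icc 0 1))
    (w : ℝ) (hw : w ∈ Set.Icc (0:ℝ) 1) :
    P {x | w < M0.inf' hM0 (fun m => genP A δ m x)} =
      ENNReal.ofReal (∏ m ∈ M0, (1 - A m w)) :=
  min_null_generalized_pvalue_distribution_general P M0 hM0 δ A hmeas hvals hD1 hD2 hD3b hD4 hArange
    hA1 hA2 w hw

end
end
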